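/- Sandwich property of the mixed bias: for any δ ∈ [0,1], r > 0, and state s with 1 < |s| < N−1 on the cycle, min{r, 1} ≤ γ_s^δ ≤ max{r, 1}, where r = γ_{s'}^δ is the bias of the single-cluster state s' with |s'| = |s|. -/

import Mathlib

/-- Forward bias of a state on the cycle of `N` individuals with `m` mutants of fitness
`r`, under mixed birth-death/death-birth updating with mixing parameter `δ`
(DB with probability `δ`, BD with probability `1−δ`):
`γ_s^δ = [(1−δ)·r(xA+yA)/(mr+N−m) + δ·(xB + (2r/(1+r))yB)/N]
       / [(1−δ)·(xA+yA)/(mr+N−m) + δ·(xA + (2/(1+r))yA)/N]`. -/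
noncomputable def gammaMix (N m : ℕ) (r δ : ℝ) (xA yA xB yB : ℕ) : ℝ :=
  ((1 - δ) * (r * ((xA : ℝ) + yA)) / (m * r + ((N : ℝ) - m)) +
      δ * ((xB : ℝ) + (2 * r / (1 + r)) * yB) / N) /
  ((1 - δ) * ((xA : ℝ) + yA) / (m * r + ((N : ℝ) - m)) +
      δ * ((xA : ℝ) + (2 / (1 + r)) * yA) / N)

/-!
The bias is a mediant `(n₁ + n₂) / (d₁ + d₂)` of a BD part and a DB part, so it lies between
`r` and `1` as soon as each part `nᵢ / dᵢ` does. For BD that ratio is `r` itself. For DB, with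
`W = xA + 2yA/(1+r)` and `V = xB + 2r yB/(1+r)`, the constraint `xA + yA = xB + yB` gives
`V - W = (r-1)(yA+yB)/(1+r)` and `rW - V = (r-1)(r xA + xB)/(1+r)`, so `V` lies between `W`
and `rW`. For the single-cluster state `V = rW`, which pins its bias to `r`.
-/

open Set

section Mediant

variable {K : Type*} [Field K] [LinearOrder K] [IsStrictOrderedRing K]

theorem add_div_add_mem_Icc {lo hi n₁ n₂ d₁ d₂ : K} (hd : 0 < d₁ + d₂)
    (h₁ : n₁ ∈ Icc (lo * d₁) (hi * d₁)) (h₂ : n₂ ∈ Icc (lo * d₂) (hi * d₂)) :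
    (n₁ + n₂) / (d₁ + d₂) ∈ Icc lo hi := by
  rw [mem_Icc, le_div_iff₀ hd, div_le_iff₀ hd]
  constructor <;> linarith [h₁.1, h₁.2, h₂.1, h₂.2]

theorem mul_div_mem_Icc_mul_div {lo hi n d : K} (c e : K) (hc : 0 ≤ c) (he : 0 ≤ e)
    (h : n ∈ Icc (lo * d) (hi * d)) :
    c * n / e ∈ Icc (lo * (c * d / e)) (hi * (c * d / e)) := by
  rw [show lo * (c * d / e) = c * (lo * d) / e by ring,
    show hi * (c * d / e) = c * (hi * d) / e by ring]
  exact ⟨div_le_div_of_nonneg_right (mul_le_mul_of_nonneg_left h.1 hc) he,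
    div_le_div_of_nonneg_right (mul_le_mul_of_nonneg_left h.2 hc) he⟩

end Mediant

theorem dbNumerator_mem_Icc {xA yA xB yB r : ℝ} (hr : 0 < r) (hxA : 0 ≤ xA) (hyA : 0 ≤ yA)
    (hxB : 0 ≤ xB) (hyB : 0 ≤ yB) (hxy : xA + yA = xB + yB) :
    xB + 2 * r / (1 + r) * yB ∈
      Icc (min r 1 * (xA + 2 / (1 + r) * yA)) (max r 1 * (xA + 2 / (1 + r) * yA)) := by
  have h1r : 0 < 1 + r := by linarith
  have hV_sub_W : xB + 2 * r / (1 + r) * yB - (xA + 2 / (1 + r) * yA) =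
      (r - 1) * ((yA + yB) / (1 + r)) := by
    field_simp
    linear_combination -(1 + r) * hxy
  have hrW_sub_V : r * (xA + 2 / (1 + r) * yA) - (xB + 2 * r / (1 + r) * yB) =
      (r - 1) * ((r * xA + xB) / (1 + r)) := by
    field_simp
    linear_combination 2 * r * hxy
  have hp : 0 ≤ (yA + yB) / (1 + r) := div_nonneg (add_nonneg hyA hyB) h1r.le
  have hq : 0 ≤ (r * xA + xB) / (1 + r) := div_nonneg (by positivity) h1r.le
  rcases le_total r 1 with h | h
  · rw [min_eq_left h, max_eq_right h]
    constructor <;> nlinarith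
  · rw [min_eq_right h, max_eq_left h]
    constructor <;> nlinarith

theorem gammaMix_mem_Icc {N m xA yA xB yB : ℕ} {r δ lo hi : ℝ}
    (hδ0 : 0 ≤ δ) (hδ1 : δ ≤ 1)
    (hQ : 0 < m * r + ((N : ℝ) - m)) (hN : 0 < (N : ℝ)) (hU : 0 < (xA : ℝ) + yA)
    (hW : 0 < (xA : ℝ) + 2 / (1 + r) * yA) (hr : r ∈ Icc lo hi)
    (hV : (xB : ℝ) + 2 * r / (1 + r) * yB ∈
      Icc (lo * ((xA : ℝ) + 2 / (1 + r) * yA)) (hi * ((xA : ℝ) + 2 / (1 + r) * yA))) :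
    gammaMix N m r δ xA yA xB yB ∈ Icc lo hi := by
  have hden := convex_Ioi (0 : ℝ) (mem_Ioi.2 (div_pos hU hQ)) (mem_Ioi.2 (div_pos hW hN))
    (sub_nonneg.2 hδ1) hδ0 (by ring)
  simp only [smul_eq_mul, mem_Ioi, ← mul_div_assoc] at hden
  refine add_div_add_mem_Icc hden ?_ (mul_div_mem_Icc_mul_div _ _ hδ0 hN.le hV)
  exact mul_div_mem_Icc_mul_div _ _ (sub_nonneg.2 hδ1) hQ.le
    ⟨mul_le_mul_of_nonneg_right hr.1 hU.le, mul_le_mul_of_nonneg_right hr.2 hU.le⟩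

theorem mixed_bias_sandwich_general (N m xA yA xB yB : ℕ) (r δ : ℝ)
    (hr : 0 < r) (hδ0 : 0 ≤ δ) (hδ1 : δ ≤ 1)
    (hm2 : m < N - 1)
    (hclusters : xA + yA = xB + yB) (hcl1 : 1 ≤ xA + yA) :
    (min r 1 ≤ gammaMix N m r δ xA yA xB yB ∧
      gammaMix N m r δ xA yA xB yB ≤ max r 1) ∧
    gammaMix N m r δ 0 1 0 1 = r := by
  have hmN : (m : ℝ) + 2 ≤ N := by exact_mod_cast (by omega : m + 2 ≤ N)
  have hN : (0 : ℝ) < N := by linarith [m.cast_nonneg (α := ℝ)]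
  have hQ : 0 < m * r + ((N : ℝ) - m) := by nlinarith [mul_nonneg m.cast_nonneg hr.le]
  have hU : (1 : ℝ) ≤ xA + yA := by exact_mod_cast hcl1
  have hW : 0 < (xA : ℝ) + 2 / (1 + r) * yA := by
    have hc : 0 < 2 / (1 + r) := by positivity
    nlinarith [mul_nonneg hc.le yA.cast_nonneg, xA.cast_nonneg (α := ℝ)]
  refine ⟨gammaMix_mem_Icc hδ0 hδ1 hQ hN (by linarith) hW ⟨min_le_left r 1, le_max_left r 1⟩
    (dbNumerator_mem_Icc hr xA.cast_nonneg yA.cast_nonneg xB.cast_nonneg yB.cast_nonneg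
      (by exact_mod_cast hclusters)), ?_⟩
  have hV : ((0 : ℕ) : ℝ) + 2 * r / (1 + r) * ((1 : ℕ) : ℝ) =
      r * (((0 : ℕ) : ℝ) + 2 / (1 + r) * ((1 : ℕ) : ℝ)) := by
    push_cast; ring
  have h := gammaMix_mem_Icc (xA := 0) (yA := 1) (xB := 0) (yB := 1) hδ0 hδ1 hQ hN
    (by norm_num) (by positivity) (left_mem_Icc.2 le_rfl) ⟨hV.ge, hV.le⟩
  exact le_antisymm h.2 h.1

/-- Sandwich property of the mixed bias: for any `δ ∈ [0,1]`, `r > 0`, and state with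
`1 < m < N−1` mutants on the cycle, `min{r,1} ≤ γ_s^δ ≤ max{r,1}`, where
`r = γ_{s'}^δ` is the bias of the single-cluster state `s'` (`xA = xB = 0`,
`yA = yB = 1`) with the same number of mutants. -/
theorem mixed_bias_sandwich (N m xA yA xB yB : ℕ) (r δ : ℝ)
    (hr : 0 < r) (hδ0 : 0 ≤ δ) (hδ1 : δ ≤ 1)
    (hm1 : 1 < m) (hm2 : m < N - 1)
    (hclusters : xA + yA = xB + yB) (hcl1 : 1 ≤ xA + yA)
    (hsizeA : xA + 2 * yA ≤ m) (hsizeB : xB + 2 * yB ≤ N - m) :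
    (min r 1 ≤ gammaMix N m r δ xA yA xB yB ∧
      gammaMix N m r δ xA yA xB yB ≤ max r 1) ∧
    gammaMix N m r δ 0 1 0 1 = r :=
  mixed_bias_sandwich_general N m xA yA xB yB r δ hr hδ0 hδ1 hm2 hclusters hcl1
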